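/- arXiv:2302.10878 — 7 statements merged into one kernel-verified Lean document; each statement's English description precedes it below -/
import Mathlib

section
/- Let ≺ be a linear order on G that is total-degree compatible, i.e., for all x, y ∈ G, ‖x‖_G < ‖y‖_G implies x ≺ y. Let a ∈ G be arbitrary and let e be the ≺-minimal element of the coset a + L (so e − a ∈ L and e ⪯ e' for every e' with e' − a ∈ L). Then c = a − e belongs to L, and c is one of the closest codewords to a with respect to the G-norm: for all c' ∈ L, ‖a − c‖_G ≤ ‖a − c'‖_G. -/
/-- Let `≺` be a total-degree compatible linear order on
`G = ∏ i, ZMod (g i)` (i.e. `‖x‖_G < ‖y‖_G → x ≺ y` where `‖a‖_G = ∑ i, (a i).val`).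
If `e` is the `≺`-minimal element of the coset `a + L`, then `c = a - e ∈ L` and
`c` is a closest codeword to `a` w.r.t. the `G`-norm. -/
theorem stmt_1 (n : ℕ) (g : Fin n → ℕ) (hg : ∀ i, 1 ≤ g i)
    (L : AddSubgroup (∀ i, ZMod (g i)))
    (r : LinearOrder (∀ i, ZMod (g i)))
    (hcompat : ∀ x y : ∀ i, ZMod (g i),
      (∑ i, (x i).val) < (∑ i, (y i).val) → r.lt x y)
    (a e : ∀ i, ZMod (g i))
    (he : e - a ∈ L) (hmin : ∀ e', e' - a ∈ L → r.le e e') :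
    a - e ∈ L ∧
      ∀ c' ∈ L, (∑ i, ((a - (a - e)) i).val) ≤ (∑ i, ((a - c') i).val) := by
  constructor
  · simpa using L.neg_mem he
  · intro c' hc'
    have h1 : (a - c') - a ∈ L := by simpa using L.neg_mem hc'
    have h2 := hmin _ h1
    have : a - (a - e) = e := by abel
    rw [this]
    by_contra h
    push_neg at h
    exact absurd h2 (not_le_of_gt (hcompat _ _ h))
end

section
/- Let l ∈ G be a coset leader of its coset modulo L (i.e., for all m ∈ G with m − l ∈ L, ‖l‖_G ≤ ‖m‖_G). Let g ∈ G be such that g i = l i for every i in the support of g (the set of indices i with g i ≠ 0), and g i = 0 for every i not in the support of g. Then g is a coset leader of its own coset modulo L: for all m ∈ G with m − g ∈ L, ‖g‖_G ≤ ‖m‖_G. -/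
/-- If `l` is a coset leader of its coset modulo `L`
(minimal `G`-norm `‖a‖_G = ∑ i, (a i).val` in `l + L`), and `x ∈ G` agrees with `l`
on the support of `x` (and vanishes off its support), then `x` is a coset leader
of its own coset modulo `L`. -/
theorem stmt_3 (n : ℕ) (g : Fin n → ℕ) (hg : ∀ i, 1 ≤ g i)
    (L : AddSubgroup (∀ i, ZMod (g i)))
    (l x : ∀ i, ZMod (g i))
    (hl : ∀ m, m - l ∈ L → (∑ i, (l i).val) ≤ (∑ i, (m i).val))
    (hsupp : ∀ i, x i ≠ 0 → x i = l i) :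
    ∀ m, m - x ∈ L → (∑ i, (x i).val) ≤ (∑ i, (m i).val) := by
  intro m hm
  haveI : ∀ i, NeZero (g i) := fun i => ⟨by have := hg i; omega⟩
  set m' := m + (l - x) with hm'
  have h1 : m' - l ∈ L := by
    have : m' - l = m - x := by ring
    rw [this]; exact hm
  have h2 := hl m' h1
  set c : Fin n → ℕ := fun i => if x i = 0 then (l i).val else 0 with hc
  have hL : (∑ i, (l i).val) = (∑ i, (x i).val) + ∑ i, c i := by
    rw [← Finset.sum_add_distrib]
    refine Finset.sum_congr rfl fun i _ => ?_
    by_cases h : x i = 0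
    · simp [hc, h]
    · simp [hc, h, ← hsupp i h]
  have hM : (∑ i, (m' i).val) ≤ (∑ i, (m i).val) + ∑ i, c i := by
    rw [← Finset.sum_add_distrib]
    refine Finset.sum_le_sum fun i _ => ?_
    by_cases h : x i = 0
    · have : m' i = m i + l i := by simp [hm', h]
      rw [this]
      simp only [hc, if_pos h]
      exact ZMod.val_add_le _ _
    · have : m' i = m i := by
        simp [hm', ← hsupp i h]
      rw [this]
      simp [hc, h]
  omega
end

section
/- The two binomial ideals associated to L coincide: the ideal I_≡(L) generated by {X^u − X^v : u, v ∈ (Fin n → ℕ), π(u) − π(v) ∈ L} equals the ideal I₁(L) generated by {X^{lift(c)} − 1 : c ∈ L} ∪ {X_i^{g i} − 1 : i ∈ Fin n} in the polynomial ring MvPolynomial (Fin n) (ZMod 2). -/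
/-!
Modulo the binomials `X i ^ g i - 1` a monomial `X^u` depends only on `π u`. Hence if
`c = π u - π v ∈ L`, then `X^u ≡ X^(lift c + v)`, and `X^(lift c + v) - X^v = X^v (X^(lift c) - 1)`
lies in `I₁(L)`. Conversely every generator of `I₁(L)` is a binomial `X^u - X^0` with
`π u ∈ L`, using `π (lift c) = c` and `π (g i • eᵢ) = 0`.
-/

open MvPolynomial

section
variable {σ R : Type*} [Fintype σ] [CommRing R] {g : σ → ℕ}

theorem MvPolynomial.monomial_sub_monomial_mem_of_modEq {I : Ideal (MvPolynomial σ R)}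
    (hI : ∀ i, X i ^ g i - 1 ∈ I) {a b : σ →₀ ℕ} (hab : ∀ i, a i ≡ b i [MOD g i]) :
    monomial a (1 : R) - monomial b 1 ∈ I := by
  rw [← Ideal.Quotient.eq]
  have hX (i : σ) : Ideal.Quotient.mk I (X i) ^ g i = 1 := by
    simpa [sub_eq_zero] using Ideal.Quotient.eq_zero_iff_mem.mpr (hI i)
  have hmk (s : σ →₀ ℕ) : Ideal.Quotient.mk I (monomial s 1) =
      ∏ i, Ideal.Quotient.mk I (X i) ^ (s i % g i) := by
    rw [monomial_eq, C_1, one_mul, Finsupp.prod_fintype _ _ fun i => pow_zero (X i), map_prod]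
    exact Finset.prod_congr rfl fun i _ => by rw [map_pow, pow_eq_pow_mod _ (hX i)]
  rw [hmk, hmk]
  exact Finset.prod_congr rfl fun i _ => by rw [hab i]

variable [∀ i, NeZero (g i)] {L : AddSubgroup (∀ i, ZMod (g i))}

theorem MvPolynomial.monomial_sub_monomial_mem_of_sub_mem {I : Ideal (MvPolynomial σ R)}
    (hX : ∀ i, X i ^ g i - 1 ∈ I)
    (hL : ∀ c ∈ L, monomial (Finsupp.equivFunOnFinite.symm fun i => (c i).val) (1 : R) - 1 ∈ I)
    {u v : σ →₀ ℕ} (huv : (fun i => ((u i : ZMod (g i)) - (v i : ZMod (g i)))) ∈ L) :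
    monomial u (1 : R) - monomial v 1 ∈ I := by
  set c : ∀ i, ZMod (g i) := fun i => (u i : ZMod (g i)) - (v i : ZMod (g i))
  set d : σ →₀ ℕ := Finsupp.equivFunOnFinite.symm fun i => (c i).val
  have hmod (i : σ) : u i ≡ (d + v) i [MOD g i] := by
    rw [← ZMod.natCast_eq_natCast_iff]
    simp [d, c]
  have hsplit : monomial u (1 : R) - monomial v 1 =
      (monomial u 1 - monomial (d + v) 1) + monomial v 1 * (monomial d 1 - 1) := by
    rw [mul_sub, mul_one, monomial_mul, one_mul, add_comm v]; ring
  rw [hsplit]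
  exact add_mem (monomial_sub_monomial_mem_of_modEq hX hmod) (I.mul_mem_left _ (hL c huv))

end

/-- The binomial ideal `I_≡(L)` generated by
`{X^u - X^v : π(u) - π(v) ∈ L}` (with `π` componentwise reduction mod `g i`)
equals the ideal `I₁(L)` generated by
`{X^(lift c) - 1 : c ∈ L} ∪ {X i ^ g i - 1 : i}` in `MvPolynomial (Fin n) (ZMod 2)`. -/
theorem stmt_4 (n : ℕ) (g : Fin n → ℕ) (hg : ∀ i, 1 ≤ g i)
    (L : AddSubgroup (∀ i, ZMod (g i))) :
    Ideal.span { p : MvPolynomial (Fin n) (ZMod 2) |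
        ∃ u v : Fin n →₀ ℕ,
          (fun i => ((u i : ZMod (g i)) - (v i : ZMod (g i)))) ∈ L ∧
          p = monomial u (1 : ZMod 2) - monomial v (1 : ZMod 2) } =
    Ideal.span
      ({ p : MvPolynomial (Fin n) (ZMod 2) |
          ∃ c ∈ L, p = monomial
            (Finsupp.equivFunOnFinite.symm fun i => (c i).val) (1 : ZMod 2) - 1 } ∪
       { p : MvPolynomial (Fin n) (ZMod 2) |
          ∃ i : Fin n, p = X i ^ g i - 1 }) := by
  have (i : Fin n) : NeZero (g i) := NeZero.of_pos (hg i)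
  apply le_antisymm <;> rw [Ideal.span_le]
  · rintro _ ⟨u, v, huv, rfl⟩
    exact monomial_sub_monomial_mem_of_sub_mem (fun i => Ideal.subset_span (.inr ⟨i, rfl⟩))
      (fun c hc => Ideal.subset_span (.inl ⟨c, hc, rfl⟩)) huv
  · rintro _ (⟨c, hc, rfl⟩ | ⟨i, rfl⟩)
    · refine Ideal.subset_span ⟨Finsupp.equivFunOnFinite.symm fun i => (c i).val, 0, ?_, by
        rw [monomial_zero', C_1]⟩
      simpa using hc
    · refine Ideal.subset_span ⟨Finsupp.single i (g i), 0, ?_, by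
        rw [monomial_zero', C_1, X_pow_eq_monomial]⟩
      convert L.zero_mem with j
      rcases eq_or_ne j i with rfl | hji
      · simp
      · simp [Finsupp.single_eq_of_ne hji]
end

section
/- Let S = {a₁, …, a_k} ⊆ G be a generating set of the subgroup L. Then the ideal I₂(L) generated by {X^{lift(a_j)} − 1 : j = 1, …, k} ∪ {X_i^{g i} − 1 : i ∈ Fin n} equals the ideal I₁(L) generated by {X^{lift(c)} − 1 : c ∈ L} ∪ {X_i^{g i} − 1 : i ∈ Fin n} in MvPolynomial (Fin n) (ZMod 2). -/
open MvPolynomial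

private lemma mono_eq_prod (n : ℕ) (u : Fin n → ℕ) :
    (monomial (Finsupp.equivFunOnFinite.symm u) (1 : ZMod 2) :
      MvPolynomial (Fin n) (ZMod 2)) = ∏ i : Fin n, X i ^ u i := by
  rw [monomial_eq, C_1, one_mul, Finsupp.prod_pow]
  simp

private lemma mod_lemma (n : ℕ) (g : Fin n → ℕ)
    (I : Ideal (MvPolynomial (Fin n) (ZMod 2)))
    (hI : ∀ i : Fin n, (X i ^ g i - 1 : MvPolynomial (Fin n) (ZMod 2)) ∈ I)
    (u : Fin n → ℕ) :
    Ideal.Quotient.mk I (monomial (Finsupp.equivFunOnFinite.symm u) (1 : ZMod 2)) =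
      Ideal.Quotient.mk I
        (monomial (Finsupp.equivFunOnFinite.symm fun i => u i % g i) (1 : ZMod 2)) := by
  have hx : ∀ i : Fin n, (Ideal.Quotient.mk I (X i)) ^ g i = 1 := by
    intro i
    have := Ideal.Quotient.eq_zero_iff_mem.mpr (hI i)
    rw [map_sub, map_pow, map_one, sub_eq_zero] at this
    exact this
  rw [mono_eq_prod, mono_eq_prod, map_prod, map_prod]
  refine Finset.prod_congr rfl fun i _ => ?_
  rw [map_pow, map_pow]
  conv_lhs => rw [← Nat.mod_add_div (u i) (g i)]
  rw [pow_add, pow_mul, hx, one_pow, mul_one]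

/-- If `S = {a₁, …, a_k}` generates the subgroup `L`, then the ideal
`I₂(L)` generated by `{X^(lift (a j)) - 1 : j} ∪ {X i ^ g i - 1 : i}` equals the ideal
`I₁(L)` generated by `{X^(lift c) - 1 : c ∈ L} ∪ {X i ^ g i - 1 : i}` in
`MvPolynomial (Fin n) (ZMod 2)`. -/
theorem stmt_5 (n k : ℕ) (g : Fin n → ℕ) (hg : ∀ i, 1 ≤ g i)
    (L : AddSubgroup (∀ i, ZMod (g i)))
    (S : Fin k → ∀ i, ZMod (g i))
    (hS : AddSubgroup.closure (Set.range S) = L) :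
    Ideal.span
      ({ p : MvPolynomial (Fin n) (ZMod 2) |
          ∃ j : Fin k, p = monomial
            (Finsupp.equivFunOnFinite.symm fun i => (S j i).val) (1 : ZMod 2) - 1 } ∪
       { p : MvPolynomial (Fin n) (ZMod 2) |
          ∃ i : Fin n, p = X i ^ g i - 1 }) =
    Ideal.span
      ({ p : MvPolynomial (Fin n) (ZMod 2) |
          ∃ c ∈ L, p = monomial
            (Finsupp.equivFunOnFinite.symm fun i => (c i).val) (1 : ZMod 2) - 1 } ∪
       { p : MvPolynomial (Fin n) (ZMod 2) |
          ∃ i : Fin n, p = X i ^ g i - 1 }) := by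
  haveI : ∀ i, NeZero (g i) := fun i => ⟨Nat.one_le_iff_ne_zero.mp (hg i)⟩
  set I₂ : Ideal (MvPolynomial (Fin n) (ZMod 2)) := Ideal.span _ with hI₂
  set I₁ : Ideal (MvPolynomial (Fin n) (ZMod 2)) := Ideal.span _ with hI₁
  set M : (∀ i, ZMod (g i)) → MvPolynomial (Fin n) (ZMod 2) :=
    fun c => monomial (Finsupp.equivFunOnFinite.symm fun i => (c i).val) (1 : ZMod 2)
    with hM
  have hXI₂ : ∀ i : Fin n, (X i ^ g i - 1 : MvPolynomial (Fin n) (ZMod 2)) ∈ I₂ := fun i =>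
    Ideal.subset_span (Or.inr ⟨i, rfl⟩)
  set π := Ideal.Quotient.mk I₂ with hπ
  -- multiplicativity in the quotient
  have key : ∀ a b : ∀ i, ZMod (g i), π (M (a + b)) = π (M a) * π (M b) := by
    intro a b
    have h1 : M (a + b) = monomial (Finsupp.equivFunOnFinite.symm
        fun i => ((a i).val + (b i).val) % g i) (1 : ZMod 2) := by
      simp only [hM]
      congr 1
      ext i
      simp [ZMod.val_add]
    have h2 : M a * M b = monomial (Finsupp.equivFunOnFinite.symm
        fun i => (a i).val + (b i).val) (1 : ZMod 2) := by
      have hadd : (Finsupp.equivFunOnFinite.symm fun i => (a i).val)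
          + (Finsupp.equivFunOnFinite.symm fun i => (b i).val)
          = Finsupp.equivFunOnFinite.symm fun i => (a i).val + (b i).val := by
        ext i; simp
      simp only [hM, monomial_mul, mul_one, hadd]
    rw [h1, ← map_mul, h2, hπ]
    exact (mod_lemma n g I₂ hXI₂ _).symm
  have hM0 : π (M 0) = 1 := by
    have : M 0 = 1 := by
      simp only [hM]
      have : (Finsupp.equivFunOnFinite.symm fun i => ((0 : ∀ i, ZMod (g i)) i).val)
          = (0 : Fin n →₀ ℕ) := by
        ext i; simp
      rw [this, monomial_zero']
      simp
    rw [this, map_one]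
  -- the subgroup of c with π (M c) = 1
  set T : AddSubgroup (∀ i, ZMod (g i)) :=
    { carrier := {c | π (M c) = 1}
      zero_mem' := hM0
      add_mem' := by
        intro a b ha hb
        simp only [Set.mem_setOf_eq] at *
        rw [key, ha, hb, one_mul]
      neg_mem' := by
        intro a ha
        simp only [Set.mem_setOf_eq] at *
        have := key (-a) a
        rw [neg_add_cancel, hM0, ha, mul_one] at this
        exact this.symm } with hT
  have hrange : Set.range S ⊆ (T : Set (∀ i, ZMod (g i))) := by
    rintro _ ⟨j, rfl⟩
    have h : M (S j) - 1 ∈ I₂ := Ideal.subset_span (Or.inl ⟨j, rfl⟩)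
    have h2 := Ideal.Quotient.eq_zero_iff_mem.mpr h
    rw [map_sub, map_one, sub_eq_zero] at h2
    exact h2
  have hLT : ∀ c ∈ L, M c - 1 ∈ I₂ := by
    intro c hc
    have hcT : c ∈ T := by
      rw [← hS] at hc
      exact (AddSubgroup.closure_le T).mpr hrange hc
    have hc' : π (M c) = 1 := hcT
    rw [← Ideal.Quotient.eq_zero_iff_mem, ← hπ, map_sub, map_one, sub_eq_zero, hc']
  apply le_antisymm
  · rw [hI₂]
    apply Ideal.span_le.mpr
    rintro p (⟨j, rfl⟩ | ⟨i, rfl⟩)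
    · apply Ideal.subset_span
      refine Or.inl ⟨S j, ?_, rfl⟩
      rw [← hS]
      exact AddSubgroup.subset_closure ⟨j, rfl⟩
    · exact Ideal.subset_span (Or.inr ⟨i, rfl⟩)
  · rw [hI₁]
    apply Ideal.span_le.mpr
    rintro p (⟨c, hc, rfl⟩ | ⟨i, rfl⟩)
    · exact hLT c hc
    · exact hXI₂ i
end

section
/- Let H be an n × n real matrix such that for every i, the vector (g i) · (i-th row of H) has all entries in ℤ, and let L_H = {c ∈ G : every entry of (lift c) · H lies in ℤ}. Then for all a, b ∈ G: a − b ∈ L_H if and only if the componentwise fractional parts of (lift a) · H and (lift b) · H coincide, i.e., Int.fract(((lift a) · H) j) = Int.fract(((lift b) · H) j) for every j. -/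
/-- Let `H` be an `n × n` real matrix such that every entry of
`(g i) • (i-th row of H)` is an integer, and let
`L_H = {c ∈ G : every entry of (lift c) ⬝ H is an integer}` (with `lift c i = (c i).val`).
Then for `a, b ∈ G = ∏ i, ZMod (g i)`: `a - b ∈ L_H` if and only if the componentwise
fractional parts of `(lift a) ⬝ H` and `(lift b) ⬝ H` coincide. -/
theorem stmt_7 (n : ℕ) (g : Fin n → ℕ) (hg : ∀ i, 1 ≤ g i)
    (H : Matrix (Fin n) (Fin n) ℝ)
    (hH : ∀ i j, ∃ z : ℤ, (g i : ℝ) * H i j = (z : ℝ))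
    (a b : ∀ i, ZMod (g i)) :
    ((a - b) ∈ { c : ∀ i, ZMod (g i) |
        ∀ j, ∃ z : ℤ,
          Matrix.vecMul (fun i => (((c i).val : ℝ))) H j = (z : ℝ) }) ↔
      (∀ j, Int.fract (Matrix.vecMul (fun i => (((a i).val : ℝ))) H j) =
            Int.fract (Matrix.vecMul (fun i => (((b i).val : ℝ))) H j)) := by
  haveI : ∀ i, NeZero (g i) := fun i => ⟨Nat.one_le_iff_ne_zero.mp (hg i)⟩
  choose z hz using hH
  have hco : ∀ i, ∃ k : ℤ, (((a i - b i).val : ℤ) - (a i).val + (b i).val) = g i * k := by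
    intro i
    have h0 : (((((a i - b i).val : ℤ) - (a i).val + (b i).val) : ℤ) : ZMod (g i)) = 0 := by
      push_cast
      simp [ZMod.natCast_val, ZMod.cast_id]
    exact (ZMod.intCast_zmod_eq_zero_iff_dvd _ _).mp h0
  choose k hk using hco
  have key : ∀ j, Matrix.vecMul (fun i => ((((a - b) i).val : ℝ))) H j
      - (Matrix.vecMul (fun i => (((a i).val : ℝ))) H j
        - Matrix.vecMul (fun i => (((b i).val : ℝ))) H j)
      = ((∑ i, k i * z i j : ℤ) : ℝ) := by
    intro j
    simp only [Matrix.vecMul, dotProduct, Pi.sub_apply]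
    rw [← Finset.sum_sub_distrib, ← Finset.sum_sub_distrib]
    push_cast
    refine Finset.sum_congr rfl fun i _ => ?_
    have h1 : ((a i - b i).val : ℝ) - (a i).val + (b i).val = (g i : ℝ) * k i := by
      exact_mod_cast congrArg (fun t : ℤ => (t : ℝ)) (hk i)
    calc ((a i - b i).val : ℝ) * H i j - ((a i).val * H i j - (b i).val * H i j)
        = (((a i - b i).val : ℝ) - (a i).val + (b i).val) * H i j := by ring
      _ = (g i : ℝ) * k i * H i j := by rw [h1]
      _ = (k i : ℝ) * ((g i : ℝ) * H i j) := by ring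
      _ = (k i : ℝ) * (z i j : ℝ) := by rw [hz]
  constructor
  · intro hmem j
    obtain ⟨w, hw⟩ := hmem j
    rw [Int.fract_eq_fract]
    refine ⟨w - ∑ i, k i * z i j, ?_⟩
    have := key j
    push_cast at this ⊢
    linarith [this, hw]
  · intro hfr j
    obtain ⟨w, hw⟩ := Int.fract_eq_fract.mp (hfr j)
    refine ⟨w + ∑ i, k i * z i j, ?_⟩
    have := key j
    push_cast at this ⊢
    linarith [this, hw]
end

section
/- For a ∈ G, the binomial X^{lift(a)} − 1 belongs to the ideal I₁(L) generated by {X^{lift(c)} − 1 : c ∈ L} ∪ {X_i^{g i} − 1 : i ∈ Fin n} in MvPolynomial (Fin n) (ZMod 2) if and only if a ∈ L. -/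
/-!
Reducing exponents modulo `g` and then modulo `L` gives an additive monoid hom
`π : (Fin n →₀ ℕ) →+ G ⧸ L`, and hence a ring hom from the polynomial ring (the monoid algebra of
`Fin n →₀ ℕ`) to the group algebra of `G ⧸ L`, sending `X^d` to `[π d]`. A binomial `X^d - 1`
lies in its kernel iff `π d = 0`; so every generator of `I₁(L)` is killed, and if `X^(lift a) - 1`
is in `I₁(L)` then `a = π (lift a)` vanishes in `G ⧸ L`, i.e. `a ∈ L`.
-/

open MvPolynomial

section ExponentMod

variable {σ : Type*}

noncomputable def exponentMod (g : σ → ℕ) : (σ →₀ ℕ) →+ ∀ i, ZMod (g i) :=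
  AddMonoidHom.pi fun i => (Nat.castAddMonoidHom _).comp (Finsupp.applyAddHom i)

@[simp]
theorem exponentMod_apply (g : σ → ℕ) (d : σ →₀ ℕ) (i : σ) : exponentMod g d i = d i :=
  rfl

theorem exponentMod_equivFunOnFinite_symm_val [Finite σ] (g : σ → ℕ) [∀ i, NeZero (g i)]
    (a : ∀ i, ZMod (g i)) :
    exponentMod g (Finsupp.equivFunOnFinite.symm fun i => (a i).val) = a := by
  ext i
  simp

theorem exponentMod_single_self (g : σ → ℕ) (i : σ) :
    exponentMod g (Finsupp.single i (g i)) = 0 := by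
  ext j
  rcases eq_or_ne i j with rfl | hij
  · simp
  · simp [hij]

end ExponentMod

section MapDomain

variable {R σ M : Type*} [AddMonoid M] (f : (σ →₀ ℕ) →+ M) (d : σ →₀ ℕ)

theorem mapDomainRingHom_monomial [CommSemiring R] (r : R) :
    AddMonoidAlgebra.mapDomainRingHom R f (monomial d r) = AddMonoidAlgebra.single (f d) r :=
  AddMonoidAlgebra.mapDomain_single

theorem monomial_one_sub_one_mem_ker_mapDomainRingHom_iff [CommRing R] [Nontrivial R] :
    monomial d (1 : R) - 1 ∈ RingHom.ker (AddMonoidAlgebra.mapDomainRingHom R f) ↔ f d = 0 := by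
  rw [RingHom.mem_ker, map_sub, sub_eq_zero, RingHom.map_one, AddMonoidAlgebra.one_def,
    mapDomainRingHom_monomial]
  exact AddMonoidAlgebra.single_left_inj (one_ne_zero (α := R))

end MapDomain

/-- For `a ∈ G`, the binomial `X^(lift a) - 1` belongs to the ideal
`I₁(L)` generated by `{X^(lift c) - 1 : c ∈ L} ∪ {X i ^ g i - 1 : i}` in
`MvPolynomial (Fin n) (ZMod 2)` if and only if `a ∈ L`. -/
theorem stmt_8 (n : ℕ) (g : Fin n → ℕ) (hg : ∀ i, 1 ≤ g i)
    (L : AddSubgroup (∀ i, ZMod (g i)))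
    (a : ∀ i, ZMod (g i)) :
    (monomial (Finsupp.equivFunOnFinite.symm fun i => (a i).val) (1 : ZMod 2) - 1 ∈
      Ideal.span
        ({ p : MvPolynomial (Fin n) (ZMod 2) |
            ∃ c ∈ L, p = monomial
              (Finsupp.equivFunOnFinite.symm fun i => (c i).val) (1 : ZMod 2) - 1 } ∪
         { p : MvPolynomial (Fin n) (ZMod 2) |
            ∃ i : Fin n, p = X i ^ g i - 1 })) ↔ a ∈ L := by
  have (i : Fin n) : NeZero (g i) := NeZero.of_pos (hg i)
  let φ := AddMonoidAlgebra.mapDomainRingHom (ZMod 2)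
    ((QuotientAddGroup.mk' L).comp (exponentMod g))
  have mem_ker_iff (d : Fin n →₀ ℕ) :
      monomial d (1 : ZMod 2) - 1 ∈ RingHom.ker φ ↔ exponentMod g d ∈ L := by
    rw [monomial_one_sub_one_mem_ker_mapDomainRingHom_iff]
    exact QuotientAddGroup.eq_zero_iff _
  refine ⟨fun h => ?_, fun ha => Ideal.subset_span (Or.inl ⟨a, ha, rfl⟩)⟩
  rw [← exponentMod_equivFunOnFinite_symm_val g a, ← mem_ker_iff]
  refine Ideal.span_le.mpr ?_ h
  rintro p (⟨c, hc, rfl⟩ | ⟨i, rfl⟩)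
  · rwa [SetLike.mem_coe, mem_ker_iff, exponentMod_equivFunOnFinite_symm_val]
  · rw [SetLike.mem_coe, X_pow_eq_monomial, mem_ker_iff, exponentMod_single_self]
    exact L.zero_mem
end

section
/- The quotient algebra MvPolynomial (Fin n) (ZMod 2) ⧸ I₁(L) is isomorphic, as a (ZMod 2)-algebra, to the group algebra AddMonoidAlgebra (ZMod 2) (G ⧸ L) of the quotient group G/L, where I₁(L) is the ideal generated by {X^{lift(c)} − 1 : c ∈ L} ∪ {X_i^{g i} − 1 : i ∈ Fin n}. -/
/-!
Sending `X i` to the class of the unit vector `Pi.single i 1` kills both kinds of generators of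
`I₁(L)`: `X ^ lift c` goes to the class of `c`, which vanishes for `c ∈ L`, and `X i ^ g i` to
that of `g i • Pi.single i 1 = 0`. Conversely, the classes `x i` of the variables satisfy
`x i ^ g i = 1`, so `c ↦ ∏ i, x i ^ (c i).val` is a character of `G` (here `g i ≠ 0` is essential:
on `ZMod 0 = ℤ`, `val` is `natAbs`), and it is trivial on `L` since `x ^ lift c = 1` there.
The two induced algebra maps are mutually inverse on generators.
-/

open MvPolynomial

/-- The ideal `I₁(L)` generated by `{X^(lift c) - 1 : c ∈ L} ∪ {X i ^ g i - 1 : i}`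
in `MvPolynomial (Fin n) (ZMod 2)`. -/
noncomputable def latticeIdeal (n : ℕ) (g : Fin n → ℕ)
    (L : AddSubgroup (∀ i, ZMod (g i))) : Ideal (MvPolynomial (Fin n) (ZMod 2)) :=
  Ideal.span
    ({ p : MvPolynomial (Fin n) (ZMod 2) |
        ∃ c ∈ L, p = monomial
          (Finsupp.equivFunOnFinite.symm fun i => (c i).val) (1 : ZMod 2) - 1 } ∪
     { p : MvPolynomial (Fin n) (ZMod 2) |
        ∃ i : Fin n, p = X i ^ g i - 1 })

theorem pow_val_add_of_pow_eq_one {M : Type*} [Monoid M] {x : M} {m : ℕ} [NeZero m]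
    (hx : x ^ m = 1) (a b : ZMod m) : x ^ (a + b).val = x ^ a.val * x ^ b.val := by
  rw [ZMod.val_add, ← pow_eq_pow_mod _ hx, pow_add]

theorem MvPolynomial.monomial_equivFunOnFinite_symm {σ R : Type*} [Fintype σ] [CommSemiring R]
    (u : σ → ℕ) : monomial (Finsupp.equivFunOnFinite.symm u) (1 : R) = ∏ i, X i ^ u i := by
  rw [monomial_eq, C_1, one_mul, Finsupp.prod_fintype _ _ fun i => pow_zero _]
  rfl

theorem sum_nsmul_pi_single_one {ι : Type*} [Fintype ι] [DecidableEq ι] {g : ι → ℕ}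
    (u : ι → ℕ) :
    ∑ i, u i • (Pi.single i 1 : ∀ j, ZMod (g j)) = fun i => (u i : ZMod (g i)) := by
  simp only [← Pi.single_smul, nsmul_eq_mul, mul_one]
  exact Finset.univ_sum_single _

section ProdPowVal

variable {M ι : Type*} [CommMonoid M] [Fintype ι] {g : ι → ℕ} [∀ i, NeZero (g i)]

@[simps]
def prodPowVal (x : ι → M) (hx : ∀ i, x i ^ g i = 1) :
    Multiplicative (∀ i, ZMod (g i)) →* M where
  toFun c := ∏ i, x i ^ (c.toAdd i).val
  map_one' := by simp
  map_mul' c c' := by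
    simp only [toAdd_mul, Pi.add_apply, pow_val_add_of_pow_eq_one (hx _), Finset.prod_mul_distrib]

theorem prodPowVal_ofAdd_single [DecidableEq ι] {x : ι → M} (hx : ∀ i, x i ^ g i = 1)
    (i : ι) :
    prodPowVal x hx (.ofAdd (Pi.single i 1)) = x i := by
  rw [prodPowVal_apply, Finset.prod_eq_single i (fun j _ hj => by simp [hj]) (by simp)]
  simp [ZMod.val_one_eq_one_mod, ← pow_eq_pow_mod _ (hx i)]

end ProdPowVal

noncomputable section

variable {R : Type*} [CommSemiring R] {n : ℕ} {g : Fin n → ℕ}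
  (L : AddSubgroup (∀ i, ZMod (g i)))

def evalGroupAlgebra :
    MvPolynomial (Fin n) R →ₐ[R] AddMonoidAlgebra R ((∀ i, ZMod (g i)) ⧸ L) :=
  aeval fun i => AddMonoidAlgebra.single (QuotientAddGroup.mk (Pi.single i 1)) 1

theorem evalGroupAlgebra_prod_X_pow (u : Fin n → ℕ) :
    evalGroupAlgebra (R := R) L (∏ i, X i ^ u i) =
      AddMonoidAlgebra.single (QuotientAddGroup.mk fun i => (u i : ZMod (g i))) 1 := by
  simp [evalGroupAlgebra, AddMonoidAlgebra.single_pow, AddMonoidAlgebra.prod_single,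
    ← sum_nsmul_pi_single_one]

theorem mk_X_pow_eq_one (i : Fin n) : Ideal.Quotient.mk (latticeIdeal n g L) (X i) ^ g i = 1 := by
  rw [← map_pow, ← map_one (Ideal.Quotient.mk _), Ideal.Quotient.mk_eq_mk_iff_sub_mem]
  exact Ideal.subset_span (Or.inr ⟨i, rfl⟩)

variable [∀ i, NeZero (g i)]

theorem latticeIdeal_le_ker_evalGroupAlgebra :
    latticeIdeal n g L ≤ RingHom.ker (evalGroupAlgebra (R := ZMod 2) L) := by
  rw [latticeIdeal, Ideal.span_le]
  rintro p (⟨c, hc, rfl⟩ | ⟨i, rfl⟩) <;>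
    simp only [SetLike.mem_coe, RingHom.mem_ker, map_sub, map_one, sub_eq_zero]
  · rw [monomial_equivFunOnFinite_symm, evalGroupAlgebra_prod_X_pow,
      funext fun i => ZMod.natCast_zmod_val (c i), (QuotientAddGroup.eq_zero_iff c).mpr hc,
      AddMonoidAlgebra.one_def]
  · simp [evalGroupAlgebra, AddMonoidAlgebra.single_pow, ← QuotientAddGroup.mk_nsmul,
      ← Pi.single_smul, AddMonoidAlgebra.one_def]

theorem prodPowVal_mk_X_eq_one {c : ∀ i, ZMod (g i)} (hc : c ∈ L) :
    prodPowVal _ (mk_X_pow_eq_one L) (.ofAdd c) = 1 := by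
  rw [prodPowVal_apply, toAdd_ofAdd]
  simp_rw [← map_pow, ← map_prod, ← monomial_equivFunOnFinite_symm]
  rw [← map_one (Ideal.Quotient.mk _), Ideal.Quotient.mk_eq_mk_iff_sub_mem]
  exact Ideal.subset_span (Or.inl ⟨c, hc, rfl⟩)

def ofGroupAlgebra :
    AddMonoidAlgebra (ZMod 2) ((∀ i, ZMod (g i)) ⧸ L) →ₐ[ZMod 2]
      MvPolynomial (Fin n) (ZMod 2) ⧸ latticeIdeal n g L :=
  AddMonoidAlgebra.lift _ _ _ <| AddMonoidHom.toMultiplicativeLeft <|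
    QuotientAddGroup.lift L (MonoidHom.toAdditiveRight (prodPowVal _ (mk_X_pow_eq_one L)))
      fun _ hc => congrArg Additive.ofMul (prodPowVal_mk_X_eq_one L hc)

theorem ofGroupAlgebra_single (c : ∀ i, ZMod (g i)) :
    ofGroupAlgebra L (AddMonoidAlgebra.single (c : (∀ i, ZMod (g i)) ⧸ L) 1) =
      prodPowVal _ (mk_X_pow_eq_one L) (.ofAdd c) := by
  rw [ofGroupAlgebra, AddMonoidAlgebra.lift_single, one_smul]
  rfl

def toGroupAlgebra :
    (MvPolynomial (Fin n) (ZMod 2) ⧸ latticeIdeal n g L) →ₐ[ZMod 2]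
      AddMonoidAlgebra (ZMod 2) ((∀ i, ZMod (g i)) ⧸ L) :=
  Ideal.Quotient.liftₐ _ (evalGroupAlgebra L) (latticeIdeal_le_ker_evalGroupAlgebra L)

theorem toGroupAlgebra_mk (p : MvPolynomial (Fin n) (ZMod 2)) :
    toGroupAlgebra L (Ideal.Quotient.mk _ p) = evalGroupAlgebra L p :=
  Ideal.Quotient.liftₐ_apply _ _ _ _

theorem toGroupAlgebra_comp_ofGroupAlgebra :
    (toGroupAlgebra L).comp (ofGroupAlgebra L) = AlgHom.id _ _ := by
  refine AddMonoidAlgebra.algHom_ext (fun q => ?_) (Subsingleton.elim _ _)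
  induction q using QuotientAddGroup.induction_on with | H c => ?_
  rw [AlgHom.comp_apply, ofGroupAlgebra_single, prodPowVal_apply, toAdd_ofAdd]
  simp_rw [← map_pow, ← map_prod, toGroupAlgebra_mk, evalGroupAlgebra_prod_X_pow,
    ZMod.natCast_zmod_val, AlgHom.id_apply]

theorem ofGroupAlgebra_comp_toGroupAlgebra :
    (ofGroupAlgebra L).comp (toGroupAlgebra L) = AlgHom.id _ _ := by
  refine Ideal.Quotient.algHom_ext _ (MvPolynomial.algHom_ext fun i => ?_)
  rw [AlgHom.comp_apply, AlgHom.comp_apply, Ideal.Quotient.mkₐ_eq_mk, toGroupAlgebra_mk,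
    evalGroupAlgebra, aeval_X, ofGroupAlgebra_single, prodPowVal_ofAdd_single]
  rfl

def quotientLatticeIdealAlgEquiv :
    (MvPolynomial (Fin n) (ZMod 2) ⧸ latticeIdeal n g L) ≃ₐ[ZMod 2]
      AddMonoidAlgebra (ZMod 2) ((∀ i, ZMod (g i)) ⧸ L) :=
  .ofAlgHom (toGroupAlgebra L) (ofGroupAlgebra L) (toGroupAlgebra_comp_ofGroupAlgebra L)
    (ofGroupAlgebra_comp_toGroupAlgebra L)

end

/-- The quotient algebra `MvPolynomial (Fin n) (ZMod 2) ⧸ I₁(L)`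
is isomorphic, as a `ZMod 2`-algebra, to the group algebra of `G ⧸ L`. -/
theorem stmt_9 (n : ℕ) (g : Fin n → ℕ) (hg : ∀ i, 1 ≤ g i)
    (L : AddSubgroup (∀ i, ZMod (g i))) :
    Nonempty ((MvPolynomial (Fin n) (ZMod 2) ⧸ latticeIdeal n g L) ≃ₐ[ZMod 2]
      AddMonoidAlgebra (ZMod 2) ((∀ i, ZMod (g i)) ⧸ L)) :=
  have : ∀ i, NeZero (g i) := fun i => NeZero.of_pos (hg i)
  ⟨quotientLatticeIdealAlgEquiv L⟩
end
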